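/- arXiv:1108.0013 — 7 statements merged into one kernel-verified Lean document; each statement's English description precedes it below -/
import Mathlib

section
/- Let E be a finite set and for each element e ∈ E let M_e be a positive semidefinite n×n complex (or real) matrix. Define f : 2^E → ℝ by f(S) = log det(I + Σ_{e∈S} M_e). Then f is submodular: for all A ⊆ B ⊆ E and e ∈ E \ B, f(A ∪ {e}) − f(A) ≥ f(B ∪ {e}) − f(B). -/
/-!
Write the increments as `X = I + Σ_A M`, `D = Σ_{B \ A} M` and `N = M_e = Cᴴ C`. Sylvester's
identity `det (Y + Cᴴ C) = det Y · det (1 + C Y⁻¹ Cᴴ)` turns the marginal gain of `e` at `Y` into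
`log det (1 + C Y⁻¹ Cᴴ)`. Matrix inversion is operator antitone, so `C (X + D)⁻¹ Cᴴ ≤ C X⁻¹ Cᴴ`,
and the determinant is monotone on positive definite matrices, so the gain can only shrink as `Y`
grows from `X` to `X + D`.
-/

open Matrix
open scoped MatrixOrder ComplexOrder

namespace Matrix

variable {m : Type*} [Fintype m] [DecidableEq m]

section CommRing

variable {α : Type*} [CommRing α]

lemma inv_sub_inv_eq_inv_mul_mul_inv (X : Matrix m m α) {Y : Matrix m m α} (hY : IsUnit Y.det) :
    X⁻¹ - Y⁻¹ = Y⁻¹ * (Y * X⁻¹ * Y - Y) * Y⁻¹ := by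
  have h : Y⁻¹ * (Y * X⁻¹ * Y - Y) * Y⁻¹ = Y⁻¹ * Y * X⁻¹ * (Y * Y⁻¹) - Y⁻¹ * Y * Y⁻¹ := by
    noncomm_ring
  rw [h, nonsing_inv_mul _ hY, mul_nonsing_inv _ hY, Matrix.one_mul, Matrix.one_mul,
    Matrix.mul_one]

lemma add_mul_inv_mul_add_sub_add {X : Matrix m m α} (hX : IsUnit X.det) (D : Matrix m m α) :
    (X + D) * X⁻¹ * (X + D) - (X + D) = D + D * X⁻¹ * D := by
  have h : (X + D) * X⁻¹ * (X + D) - (X + D) =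
      X * X⁻¹ * X + X * X⁻¹ * D + D * (X⁻¹ * X) + D * X⁻¹ * D - X - D := by
    noncomm_ring
  rw [h, nonsing_inv_mul _ hX, mul_nonsing_inv _ hX]
  noncomm_ring

end CommRing

lemma PosDef.isUnit_det {𝕜 : Type*} [RCLike 𝕜] {A : Matrix m m 𝕜} (hA : A.PosDef) :
    IsUnit A.det :=
  (isUnit_iff_isUnit_det A).mp hA.isUnit

lemma PosDef.inv_sub_inv_add_posSemidef {𝕜 : Type*} [RCLike 𝕜] {X D : Matrix m m 𝕜}
    (hX : X.PosDef) (hD : D.PosSemidef) : (X⁻¹ - (X + D)⁻¹).PosSemidef := by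
  have hY := hX.add_posSemidef hD
  rw [inv_sub_inv_eq_inv_mul_mul_inv X hY.isUnit_det, add_mul_inv_mul_add_sub_add hX.isUnit_det]
  have hDXD : (D + D * X⁻¹ * D).PosSemidef := by
    have h := hX.inv.posSemidef.conjTranspose_mul_mul_same D
    rw [hD.isHermitian.eq] at h
    exact hD.add h
  simpa only [hY.inv.isHermitian.eq] using hDXD.conjTranspose_mul_mul_same (X + D)⁻¹

lemma PosSemidef.one_le_det_one_add {S : Matrix m m ℝ} (hS : S.PosSemidef) : 1 ≤ (1 + S).det := by
  have hH : (1 + S).IsHermitian := isHermitian_one.add hS.isHermitian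
  have h1 : algebraMap ℝ (Matrix m m ℝ) 1 ≤ 1 + S := by
    rwa [map_one, le_iff, add_sub_cancel_left]
  rw [algebraMap_le_iff_le_spectrum hH.isSelfAdjoint] at h1
  rw [hH.det_eq_prod_eigenvalues]
  exact Finset.one_le_prod fun i _ => h1 _ (hH.eigenvalues_mem_spectrum_real i)

lemma PosDef.det_le_det_add {A R : Matrix m m ℝ} (hA : A.PosDef) (hR : R.PosSemidef) :
    A.det ≤ (A + R).det := by
  obtain ⟨C, rfl⟩ := CStarAlgebra.nonneg_iff_eq_star_mul_self.mp hR.nonneg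
  rw [star_eq_conjTranspose, det_add_mul _ _ hA.isUnit_det]
  have hCAC := hA.inv.posSemidef.mul_mul_conjTranspose_same C
  exact le_mul_of_one_le_right hA.det_pos.le hCAC.one_le_det_one_add

lemma PosDef.det_one_add_mul_inv_add_mul_le {X D : Matrix m m ℝ} (hX : X.PosDef)
    (hD : D.PosSemidef) (C : Matrix m m ℝ) :
    (1 + C * (X + D)⁻¹ * Cᴴ).det ≤ (1 + C * X⁻¹ * Cᴴ).det := by
  have hA : (1 + C * (X + D)⁻¹ * Cᴴ).PosDef :=
    PosDef.one.add_posSemidef ((hX.add_posSemidef hD).inv.posSemidef.mul_mul_conjTranspose_same C)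
  have hR := (hX.inv_sub_inv_add_posSemidef hD).mul_mul_conjTranspose_same C
  convert hA.det_le_det_add hR using 2
  noncomm_ring

lemma PosDef.det_add_add_mul_det_le {X D N : Matrix m m ℝ} (hX : X.PosDef) (hD : D.PosSemidef)
    (hN : N.PosSemidef) : (X + D + N).det * X.det ≤ (X + N).det * (X + D).det := by
  obtain ⟨C, rfl⟩ := CStarAlgebra.nonneg_iff_eq_star_mul_self.mp hN.nonneg
  have hY := hX.add_posSemidef hD
  rw [star_eq_conjTranspose, det_add_mul _ _ hY.isUnit_det, det_add_mul _ _ hX.isUnit_det]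
  calc (X + D).det * (1 + C * (X + D)⁻¹ * Cᴴ).det * X.det
      ≤ (X + D).det * (1 + C * X⁻¹ * Cᴴ).det * X.det := by
        gcongr
        · exact hX.det_pos.le
        · exact hY.det_pos.le
        · exact hX.det_one_add_mul_inv_add_mul_le hD C
    _ = X.det * (1 + C * X⁻¹ * Cᴴ).det * (X + D).det := by ring

lemma PosDef.log_det_add_add_sub_le {X D N : Matrix m m ℝ} (hX : X.PosDef) (hD : D.PosSemidef)
    (hN : N.PosSemidef) :
    Real.log (X + D + N).det - Real.log (X + D).det ≤ Real.log (X + N).det - Real.log X.det := by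
  have hY := hX.add_posSemidef hD
  have h := Real.log_le_log (mul_pos (hY.add_posSemidef hN).det_pos hX.det_pos)
    (hX.det_add_add_mul_det_le hD hN)
  rw [Real.log_mul (hY.add_posSemidef hN).det_pos.ne' hX.det_pos.ne',
    Real.log_mul (hX.add_posSemidef hN).det_pos.ne' hY.det_pos.ne'] at h
  linarith

end Matrix

theorem logdet_submodular_general {ι : Type*} [DecidableEq ι] {n : ℕ}
    (M : ι → Matrix (Fin n) (Fin n) ℝ) (hM : ∀ e, (M e).PosSemidef)
    (f : Finset ι → ℝ)
    (hf : ∀ S : Finset ι, f S = Real.log (Matrix.det (1 + ∑ e ∈ S, M e))) :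
    ∀ A B : Finset ι, A ⊆ B → ∀ e ∉ B,
      f (insert e A) - f A ≥ f (insert e B) - f B := by
  intro A B hAB e heB
  have hX : (1 + ∑ a ∈ A, M a).PosDef :=
    PosDef.one.add_posSemidef (posSemidef_sum A fun a _ => hM a)
  have hD : (∑ a ∈ B \ A, M a).PosSemidef := posSemidef_sum _ fun a _ => hM a
  have hB : 1 + ∑ a ∈ B, M a = (1 + ∑ a ∈ A, M a) + ∑ a ∈ B \ A, M a := by
    rw [add_assoc, add_comm (∑ a ∈ A, M a), Finset.sum_sdiff hAB]
  have hinsert : ∀ S, e ∉ S → 1 + ∑ a ∈ insert e S, M a = (1 + ∑ a ∈ S, M a) + M e :=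
    fun S heS => by rw [Finset.sum_insert heS]; abel
  rw [ge_iff_le, hf, hf, hf, hf, hinsert B heB, hinsert A (fun h => heB (hAB h)), hB]
  exact hX.log_det_add_add_sub_le hD (hM e)

/-- `f(S) = log det(I + Σ_{e∈S} M_e)` with each `M_e` positive
semidefinite is a submodular set function. -/
theorem logdet_submodular {ι : Type*} [Fintype ι] [DecidableEq ι] {n : ℕ}
    (M : ι → Matrix (Fin n) (Fin n) ℝ) (hM : ∀ e, (M e).PosSemidef)
    (f : Finset ι → ℝ)
    (hf : ∀ S : Finset ι, f S = Real.log (Matrix.det (1 + ∑ e ∈ S, M e))) :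
    ∀ A B : Finset ι, A ⊆ B → ∀ e ∉ B,
      f (insert e A) - f A ≥ f (insert e B) - f B :=
  logdet_submodular_general M hM f hf
end

section
/- Let f : 2^E → ℝ≥0 be a monotone submodular function with f(∅)=0 (a rank function) on a finite set E, and let Q : E → ℝ≥0. Define f'(U) = min over R ⊆ U of ( f(U \ R) + Σ_{e∈R} Q(e) ). Then f' is again a monotone submodular function with f'(∅)=0. -/
/-!
Submodularity is used in its lattice form `f (A ∩ B) + f (A ∪ B) ≤ f A + f B`, which follows from
diminishing returns by adding the elements of `A \ B` one at a time, to `A ∩ B` and to `B`.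
Substituting `P = U \ R`, the truncation is `f' U = min_{P ⊆ U} (f P + Q (U \ P))`. If `P ⊆ X` and
`S ⊆ Y` are optimal, then `P ∩ S ⊆ X ∩ Y` and `P ∪ S ⊆ X ∪ Y` are admissible: their `f`-terms are
bounded by submodularity of `f`, and their `Q`-terms add up to exactly `Q (X \ P) + Q (Y \ S)`,
since `Q (U \ P) = Q U - Q P` is modular. For monotonicity, an optimal `P ⊆ B` gives the candidate
`A ∩ P ⊆ A`.
-/

open Finset

section

variable {ι : Type*} [DecidableEq ι]

def IsSubmodular (f : Finset ι → ℝ) : Prop :=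
  ∀ A B : Finset ι, f (A ∩ B) + f (A ∪ B) ≤ f A + f B

theorem sub_le_sub_union_of_subset {f : Finset ι → ℝ}
    (hf : ∀ A B : Finset ι, A ⊆ B → ∀ e ∉ B, f (insert e A) - f A ≥ f (insert e B) - f B)
    {A B C : Finset ι} (hAB : A ⊆ B) (hCB : Disjoint C B) :
    f (B ∪ C) - f B ≤ f (A ∪ C) - f A := by
  induction C using Finset.induction_on with
  | empty => simp
  | insert e C heC ih =>
    rw [disjoint_insert_left] at hCB
    have hstep := hf (A ∪ C) (B ∪ C) (union_subset_union hAB subset_rfl) e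
      (by simp [hCB.1, heC])
    rw [union_insert, union_insert]
    linarith [ih hCB.2]

theorem isSubmodular_of_sub_le_sub_insert {f : Finset ι → ℝ}
    (hf : ∀ A B : Finset ι, A ⊆ B → ∀ e ∉ B, f (insert e A) - f A ≥ f (insert e B) - f B) :
    IsSubmodular f := by
  intro A B
  have h := sub_le_sub_union_of_subset hf (inter_subset_right : A ∩ B ⊆ B)
    (disjoint_sdiff_self_left : Disjoint (A \ B) B)
  rw [union_sdiff_self_eq_union, union_comm (A ∩ B), sdiff_union_inter, union_comm] at h
  linarith

theorem IsSubmodular.sub_le_sub_insert {f : Finset ι → ℝ} (hf : IsSubmodular f)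
    {A B : Finset ι} (hAB : A ⊆ B) {e : ι} (he : e ∉ B) :
    f (insert e A) - f A ≥ f (insert e B) - f B := by
  have h := hf (insert e A) B
  rw [insert_inter_of_notMem he, inter_eq_left.2 hAB, insert_union, union_eq_right.2 hAB] at h
  linarith

theorem sum_sdiff_inter_add_sum_sdiff_union {G : Type*} [AddCommGroup G] (Q : ι → G)
    {P S X Y : Finset ι} (hPX : P ⊆ X) (hSY : S ⊆ Y) :
    ∑ e ∈ (X ∩ Y) \ (P ∩ S), Q e + ∑ e ∈ (X ∪ Y) \ (P ∪ S), Q e =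
      ∑ e ∈ X \ P, Q e + ∑ e ∈ Y \ S, Q e := by
  rw [sum_sdiff_eq_sub (inter_subset_inter hPX hSY), sum_sdiff_eq_sub (union_subset_union hPX hSY),
    sum_sdiff_eq_sub hPX, sum_sdiff_eq_sub hSY, sub_add_sub_comm, sub_add_sub_comm,
    add_comm (∑ e ∈ X ∩ Y, Q e), add_comm (∑ e ∈ P ∩ S, Q e), sum_union_inter, sum_union_inter]

noncomputable def truncatedRank (f : Finset ι → ℝ) (Q : ι → ℝ) (U : Finset ι) : ℝ :=
  U.powerset.inf' (powerset_nonempty U) fun R => f (U \ R) + ∑ e ∈ R, Q e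

variable {f : Finset ι → ℝ} {Q : ι → ℝ}

theorem truncatedRank_le {P U : Finset ι} (hP : P ⊆ U) :
    truncatedRank f Q U ≤ f P + ∑ e ∈ U \ P, Q e := by
  have h := inf'_le (fun R => f (U \ R) + ∑ e ∈ R, Q e) (mem_powerset.2 (sdiff_subset : U \ P ⊆ U))
  rwa [Finset.sdiff_sdiff_eq_self hP] at h

theorem exists_truncatedRank_eq (f : Finset ι → ℝ) (Q : ι → ℝ) (U : Finset ι) :
    ∃ P ⊆ U, truncatedRank f Q U = f P + ∑ e ∈ U \ P, Q e := by
  obtain ⟨R, hR, hval⟩ :=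
    exists_mem_eq_inf' (powerset_nonempty U) fun R => f (U \ R) + ∑ e ∈ R, Q e
  refine ⟨U \ R, sdiff_subset, ?_⟩
  rw [Finset.sdiff_sdiff_eq_self (mem_powerset.1 hR)]
  exact hval

theorem truncatedRank_empty (hf : f ∅ = 0) : truncatedRank f Q ∅ = 0 := by
  simp [truncatedRank, hf]

theorem truncatedRank_mono (hf : Monotone f) (hQ : ∀ e, 0 ≤ Q e) :
    Monotone (truncatedRank f Q) := by
  intro A B hAB
  obtain ⟨P, -, hP⟩ := exists_truncatedRank_eq f Q B
  calc truncatedRank f Q A ≤ f (A ∩ P) + ∑ e ∈ A \ (A ∩ P), Q e := truncatedRank_le inter_subset_left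
    _ ≤ f P + ∑ e ∈ B \ P, Q e := by
      rw [sdiff_inter_self_left]
      gcongr
      · exact hf inter_subset_right
      · exact fun e _ _ => hQ e
    _ = truncatedRank f Q B := hP.symm

theorem IsSubmodular.truncatedRank (hf : IsSubmodular f) : IsSubmodular (truncatedRank f Q) := by
  intro X Y
  obtain ⟨P, hPX, hP⟩ := exists_truncatedRank_eq f Q X
  obtain ⟨S, hSY, hS⟩ := exists_truncatedRank_eq f Q Y
  have hinter := truncatedRank_le (f := f) (Q := Q) (inter_subset_inter hPX hSY)
  have hunion := truncatedRank_le (f := f) (Q := Q) (union_subset_union hPX hSY)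
  linarith [hf P S, sum_sdiff_inter_add_sum_sdiff_union Q hPX hSY]

end

theorem truncated_rank_function_general {ι : Type*} [DecidableEq ι]
    (f : Finset ι → ℝ)
    (hf_norm : f ∅ = 0)
    (hf_mono : ∀ A B : Finset ι, A ⊆ B → f A ≤ f B)
    (hf_sub : ∀ A B : Finset ι, A ⊆ B → ∀ e ∉ B,
      f (insert e A) - f A ≥ f (insert e B) - f B)
    (Q : ι → ℝ) (hQ : ∀ e, 0 ≤ Q e)
    (f' : Finset ι → ℝ)
    (hf' : ∀ U : Finset ι,
      f' U = U.powerset.inf' (Finset.powerset_nonempty U)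
        (fun R => f (U \ R) + ∑ e ∈ R, Q e)) :
    f' ∅ = 0 ∧
    (∀ A B : Finset ι, A ⊆ B → f' A ≤ f' B) ∧
    (∀ A B : Finset ι, A ⊆ B → ∀ e ∉ B,
      f' (insert e A) - f' A ≥ f' (insert e B) - f' B) := by
  obtain rfl : f' = truncatedRank f Q := funext hf'
  exact ⟨truncatedRank_empty hf_norm,
    fun A B hAB => truncatedRank_mono (fun A B => hf_mono A B) hQ hAB,
    fun A B hAB e he =>
      (isSubmodular_of_sub_le_sub_insert hf_sub).truncatedRank.sub_le_sub_insert hAB he⟩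

/-- if `f` is a normalized monotone submodular (rank) function and
`Q ≥ 0`, then `f'(U) = min_{R ⊆ U} ( f(U \ R) + Σ_{e∈R} Q e )` is again a
normalized monotone submodular function. -/
theorem truncated_rank_function {ι : Type*} [Fintype ι] [DecidableEq ι]
    (f : Finset ι → ℝ)
    (hf_nonneg : ∀ S, 0 ≤ f S)
    (hf_norm : f ∅ = 0)
    (hf_mono : ∀ A B : Finset ι, A ⊆ B → f A ≤ f B)
    (hf_sub : ∀ A B : Finset ι, A ⊆ B → ∀ e ∉ B,
      f (insert e A) - f A ≥ f (insert e B) - f B)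
    (Q : ι → ℝ) (hQ : ∀ e, 0 ≤ Q e)
    (f' : Finset ι → ℝ)
    (hf' : ∀ U : Finset ι,
      f' U = U.powerset.inf' (Finset.powerset_nonempty U)
        (fun R => f (U \ R) + ∑ e ∈ R, Q e)) :
    f' ∅ = 0 ∧
    (∀ A B : Finset ι, A ⊆ B → f' A ≤ f' B) ∧
    (∀ A B : Finset ι, A ⊆ B → ∀ e ∉ B,
      f' (insert e A) - f' A ≥ f' (insert e B) - f' B) :=
  truncated_rank_function_general f hf_norm hf_mono hf_sub Q hQ f' hf'
end

section
/- Let f : 2^E → ℝ≥0 be a rank function (normalized, monotone, submodular) on a finite set E, Q : E → ℝ≥0, and let U ⊆ E. Define the polymatroid P(U,f) = { r ∈ ℝ≥0^U : Σ_{e∈A} r_e ≤ f(A) for all A ⊆ U } and the box B(U) = { r ∈ ℝ≥0^U : r_e ≤ Q(e) for all e ∈ U }. Then P(U,f) ∩ B(U) = P(U,f') where f'(A) = min_{R⊆A} ( f(A\R) + Σ_{e∈R} Q(e) ). -/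
/-- the intersection of the polymatroid `P(U,f)` with the box
`B(U)` given by queue sizes `Q` equals the polymatroid `P(U,f')` where
`f'(A) = min_{R ⊆ A} ( f(A \ R) + Σ_{e∈R} Q e )`. -/
theorem polymatroid_box_intersection {ι : Type*} [Fintype ι] [DecidableEq ι]
    (f : Finset ι → ℝ)
    (hf_nonneg : ∀ S, 0 ≤ f S)
    (hf_norm : f ∅ = 0)
    (hf_mono : ∀ A B : Finset ι, A ⊆ B → f A ≤ f B)
    (hf_sub : ∀ A B : Finset ι, A ⊆ B → ∀ e ∉ B,
      f (insert e A) - f A ≥ f (insert e B) - f B)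
    (Q : ι → ℝ) (hQ : ∀ e, 0 ≤ Q e)
    (U : Finset ι)
    (f' : Finset ι → ℝ)
    (hf' : ∀ A : Finset ι,
      f' A = A.powerset.inf' (Finset.powerset_nonempty A)
        (fun R => f (A \ R) + ∑ e ∈ R, Q e)) :
    ({r : ι → ℝ | (∀ e ∈ U, 0 ≤ r e) ∧ ∀ A ⊆ U, ∑ e ∈ A, r e ≤ f A} ∩
     {r : ι → ℝ | ∀ e ∈ U, 0 ≤ r e ∧ r e ≤ Q e}) =
    {r : ι → ℝ | (∀ e ∈ U, 0 ≤ r e) ∧ ∀ A ⊆ U, ∑ e ∈ A, r e ≤ f' A} := by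
  ext r
  simp only [Set.mem_inter_iff, Set.mem_setOf_eq]
  constructor
  · rintro ⟨⟨hnn, hP⟩, hB⟩
    refine ⟨hnn, fun A hA => ?_⟩
    rw [hf']
    apply Finset.le_inf'
    intro R hR
    rw [Finset.mem_powerset] at hR
    have hsplit : ∑ e ∈ A, r e = ∑ e ∈ A \ R, r e + ∑ e ∈ R, r e := by
      rw [Finset.sum_sdiff hR]
    rw [hsplit]
    apply add_le_add
    · exact hP _ (Finset.Subset.trans (Finset.sdiff_subset) hA)
    · exact Finset.sum_le_sum fun e he => (hB e (hA (hR he))).2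
  · rintro ⟨hnn, hP⟩
    have hle : ∀ A ⊆ U, ∑ e ∈ A, r e ≤ f A := by
      intro A hA
      refine (hP A hA).trans ?_
      rw [hf']
      have : f A = f (A \ ∅) + ∑ e ∈ (∅ : Finset ι), Q e := by simp
      rw [this]
      exact Finset.inf'_le _ (by simp)
    refine ⟨⟨hnn, hle⟩, fun e he => ⟨hnn e he, ?_⟩⟩
    have h1 : ∑ x ∈ {e}, r x ≤ f' {e} := hP {e} (Finset.singleton_subset_iff.2 he)
    have h2 : f' {e} ≤ f ({e} \ {e}) + ∑ x ∈ ({e} : Finset ι), Q x := by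
      rw [hf']
      exact Finset.inf'_le _ (by simp)
    simpa [hf_norm] using h1.trans h2
end

section
/- Let g : 2^E → ℝ≥0 be a rank function (normalized, monotone, submodular) on a finite set E. For a set U ⊆ E with a weight function α : U → ℝ≥0, the maximum of Σ_{e∈U} α_e r_e over the polymatroid P(U,g) = { r ∈ ℝ≥0^U : Σ_{e∈A} r_e ≤ g(A) ∀ A ⊆ U } is attained at the corner point obtained by ordering the elements of U in non-increasing weight order e_1,…,e_m (α_{e_1} ≥ … ≥ α_{e_m}) and setting r_{e_k} = g({e_1,…,e_k}) − g({e_1,…,e_{k−1}}); moreover the maximum value equals Σ_{k=1}^{m} (α_{e_k} − α_{e_{k+1}}) g({e_1,…,e_k}) with the convention α_{e_{m+1}} = 0. -/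
private lemma abel_aux (β S : ℕ → ℝ) (m : ℕ) :
    ∑ j ∈ Finset.range m, β j * (S (j+1) - S j)
      = β m * S m - β 0 * S 0 + ∑ j ∈ Finset.range m, (β j - β (j+1)) * S (j+1) := by
  induction m with
  | zero => simp
  | succ n ih => rw [Finset.sum_range_succ, Finset.sum_range_succ, ih]; ring

/-- Edmonds' greedy theorem for polymatroids: the weighted sum
`Σ α_e r_e` over the polymatroid `P(U,g)` is maximized at the corner point `r`
obtained from a non-increasing-weight ordering `σ` of `U`, and the maximum
value equals `Σ_k (α_{e_k} − α_{e_{k+1}}) g({e_1,…,e_k})`. -/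
theorem polymatroid_greedy {ι : Type*} [Fintype ι] [DecidableEq ι]
    (g : Finset ι → ℝ)
    (hg_nonneg : ∀ S, 0 ≤ g S)
    (hg_norm : g ∅ = 0)
    (hg_mono : ∀ A B : Finset ι, A ⊆ B → g A ≤ g B)
    (hg_sub : ∀ A B : Finset ι, A ⊆ B → ∀ e ∉ B,
      g (insert e A) - g A ≥ g (insert e B) - g B)
    (U : Finset ι) {m : ℕ}
    (σ : Fin m → ι) (hσ_inj : Function.Injective σ)
    (hσ_im : Finset.univ.image σ = U)
    (α : ι → ℝ) (hα : ∀ e, 0 ≤ α e)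
    (hord : ∀ j k : Fin m, j ≤ k → α (σ k) ≤ α (σ j))
    (P : ℕ → Finset ι)
    (hP : ∀ j : ℕ, P j = (Finset.univ.filter (fun k : Fin m => (k : ℕ) < j)).image σ)
    (r : ι → ℝ)
    (hr : ∀ k : Fin m, r (σ k) = g (P ((k : ℕ) + 1)) - g (P (k : ℕ)))
    (hr0 : ∀ e ∉ U, r e = 0)
    (β : ℕ → ℝ)
    (hβ : ∀ j : ℕ, β j = if h : j < m then α (σ ⟨j, h⟩) else 0) :
    (∀ e ∈ U, 0 ≤ r e) ∧
    (∀ A ⊆ U, ∑ e ∈ A, r e ≤ g A) ∧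
    IsGreatest {x : ℝ | ∃ r' : ι → ℝ, (∀ e ∈ U, 0 ≤ r' e) ∧
        (∀ A ⊆ U, ∑ e ∈ A, r' e ≤ g A) ∧ x = ∑ e ∈ U, α e * r' e}
      (∑ e ∈ U, α e * r e) ∧
    (∑ e ∈ U, α e * r e) =
      ∑ j ∈ Finset.range m, (β j - β (j + 1)) * g (P (j + 1)) := by
  -- basic facts about P
  have hPsub : ∀ j j' : ℕ, j ≤ j' → P j ⊆ P j' := by
    intro j j' h x hx
    rw [hP] at hx ⊢
    simp only [Finset.mem_image, Finset.mem_filter, Finset.mem_univ, true_and] at hx ⊢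
    obtain ⟨k, hk, rfl⟩ := hx
    exact ⟨k, lt_of_lt_of_le hk h, rfl⟩
  have hP0 : P 0 = ∅ := by simp [hP]
  have hPm : P m = U := by
    rw [hP, ← hσ_im]
    congr 1
    exact Finset.filter_true_of_mem (fun k _ => k.isLt)
  have hnotin : ∀ (j : ℕ) (h : j < m), σ ⟨j, h⟩ ∉ P j := by
    intro j h hc
    rw [hP] at hc
    simp only [Finset.mem_image, Finset.mem_filter, Finset.mem_univ, true_and] at hc
    obtain ⟨k, hk, hk2⟩ := hc
    have hkj := hσ_inj hk2
    rw [hkj] at hk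
    exact absurd hk (by simp)
  have hstep : ∀ (j : ℕ) (h : j < m), P (j+1) = insert (σ ⟨j, h⟩) (P j) := by
    intro j h
    rw [hP, hP]
    ext x
    simp only [Finset.mem_image, Finset.mem_filter, Finset.mem_univ, true_and,
      Finset.mem_insert]
    constructor
    · rintro ⟨k, hk, rfl⟩
      rcases Nat.lt_succ_iff_lt_or_eq.mp hk with hk' | hk'
      · exact Or.inr ⟨k, hk', rfl⟩
      · exact Or.inl (by congr 1; exact Fin.ext hk')
    · rintro (rfl | ⟨k, hk, rfl⟩)
      · exact ⟨⟨j, h⟩, Nat.lt_succ_self j, rfl⟩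
      · exact ⟨k, Nat.lt_succ_of_lt hk, rfl⟩
  -- facts about β
  have hβm : β m = 0 := by rw [hβ, dif_neg (lt_irrefl m)]
  have hβmono : ∀ j, β (j+1) ≤ β j := by
    intro j
    rw [hβ j, hβ (j+1)]
    by_cases h : j + 1 < m
    · have h' : j < m := Nat.lt_of_succ_lt h
      rw [dif_pos h, dif_pos h']
      exact hord ⟨j, h'⟩ ⟨j+1, h⟩ (by simp [Fin.le_def])
    · rw [dif_neg h]
      split
      · exact hα _
      · exact le_rfl
  -- reindexing sums over U
  have hsumU : ∀ f : ι → ℝ, ∑ e ∈ U, f e = ∑ k : Fin m, f (σ k) := by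
    intro f
    rw [← hσ_im, Finset.sum_image (fun x _ y _ h => hσ_inj h)]
  -- telescoping
  have htel : ∀ j, j ≤ m → ∑ e ∈ P j, r e = g (P j) := by
    intro j
    induction j with
    | zero => intro _; rw [hP0]; simp [hg_norm]
    | succ n ih =>
      intro h
      have hn : n < m := h
      have hrn := hr ⟨n, hn⟩
      simp only [Fin.val_mk] at hrn
      rw [hstep n hn, Finset.sum_insert (hnotin n hn), hrn, ih (le_of_lt hn),
        ← hstep n hn]
      ring
  -- nonnegativity of r on U
  have hrnn : ∀ e ∈ U, 0 ≤ r e := by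
    intro e he
    rw [← hσ_im] at he
    simp only [Finset.mem_image, Finset.mem_univ, true_and] at he
    obtain ⟨k, rfl⟩ := he
    rw [hr k]
    have := hg_mono _ _ (hPsub (k : ℕ) ((k : ℕ)+1) (Nat.le_succ _))
    linarith
  -- feasibility
  have hfeas : ∀ A ⊆ U, ∑ e ∈ A, r e ≤ g A := by
    have main : ∀ j, ∀ A ⊆ P j, ∑ e ∈ A, r e ≤ g A := by
      intro j
      induction j with
      | zero =>
        intro A hA
        rw [hP0] at hA
        rw [Finset.subset_empty.mp hA]
        simp [hg_norm]
      | succ n ih =>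
        intro A hA
        by_cases hn : n < m
        · rw [hstep n hn] at hA
          by_cases heA : σ ⟨n, hn⟩ ∈ A
          · have hA' : A.erase (σ ⟨n, hn⟩) ⊆ P n := by
              intro x hx
              rcases Finset.mem_insert.mp (hA (Finset.mem_of_mem_erase hx)) with h1 | h1
              · exact absurd h1 (Finset.ne_of_mem_erase hx)
              · exact h1
            have hsub := hg_sub (A.erase (σ ⟨n, hn⟩)) (P n) hA' (σ ⟨n, hn⟩) (hnotin n hn)
            have hins : insert (σ ⟨n, hn⟩) (A.erase (σ ⟨n, hn⟩)) = A :=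
              Finset.insert_erase heA
            have h1 : ∑ e' ∈ A, r e' = r (σ ⟨n, hn⟩) + ∑ e' ∈ A.erase (σ ⟨n, hn⟩), r e' := by
              rw [← hins, Finset.sum_insert (Finset.notMem_erase _ _), hins]
            have h2 := ih _ hA'
            have hre : r (σ ⟨n, hn⟩) = g (P (n+1)) - g (P n) := by
              have := hr ⟨n, hn⟩; simpa using this
            rw [← hstep n hn, hins] at hsub
            linarith
          · exact ih A (fun x hx =>
              (Finset.mem_insert.mp (hA hx)).resolve_left (by rintro rfl; exact heA hx))
        · have hPn : P (n+1) = P n := by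
            rw [hP, hP]
            congr 1
            ext k
            simp only [Finset.mem_filter, Finset.mem_univ, true_and]
            have := k.isLt
            omega
          rw [hPn] at hA
          exact ih A hA
    intro A hA
    exact main m A (hPm ▸ hA)
  -- Abel summation identity for arbitrary r'
  have key : ∀ r' : ι → ℝ,
      ∑ e ∈ U, α e * r' e
        = ∑ j ∈ Finset.range m, (β j - β (j+1)) * (∑ e ∈ P (j+1), r' e) := by
    intro r'
    set S : ℕ → ℝ := fun j => ∑ e ∈ P j, r' e with hS
    have hS0 : S 0 = 0 := by simp [hS, hP0]
    have h1 : ∑ e ∈ U, α e * r' e = ∑ j ∈ Finset.range m, β j * (S (j+1) - S j) := by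
      rw [hsumU]
      rw [← Fin.sum_univ_eq_sum_range (fun j => β j * (S (j+1) - S j)) m]
      apply Finset.sum_congr rfl
      intro k _
      have hβk : β (k : ℕ) = α (σ k) := by
        rw [hβ, dif_pos k.isLt]
      have hSk : S ((k:ℕ)+1) - S (k:ℕ) = r' (σ k) := by
        simp only [hS]
        rw [hstep (k : ℕ) k.isLt, Finset.sum_insert (hnotin (k : ℕ) k.isLt)]
        have hfe : (⟨(k:ℕ), k.isLt⟩ : Fin m) = k := by simp
        rw [hfe]
        ring
      rw [hβk, hSk]
    rw [h1, abel_aux β S m, hβm, hS0]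
    simp [hS]
  have hmain : ∑ e ∈ U, α e * r e
      = ∑ j ∈ Finset.range m, (β j - β (j+1)) * g (P (j+1)) := by
    rw [key r]
    apply Finset.sum_congr rfl
    intro j hj
    rw [htel (j+1) (Finset.mem_range.mp hj)]
  refine ⟨hrnn, hfeas, ⟨⟨r, hrnn, hfeas, rfl⟩, ?_⟩, hmain⟩
  rintro x ⟨r', hr'nn, hr'feas, rfl⟩
  rw [key r', hmain]
  apply Finset.sum_le_sum
  intro j hj
  have hjm : j < m := Finset.mem_range.mp hj
  have h1 : 0 ≤ β j - β (j+1) := sub_nonneg.mpr (hβmono j)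
  have h2 : ∑ e ∈ P (j+1), r' e ≤ g (P (j+1)) := by
    apply hr'feas
    rw [← hPm]
    exact hPsub (j+1) m hjm
  exact mul_le_mul_of_nonneg_left h2 h1
end

section
/- Greedy 1/(p+1) guarantee on p-systems: Let h : 2^E → ℝ≥0 be a normalized monotone submodular function on a finite set E and let I ⊆ 2^E be the intersection of the independence families of p matroids on E. Then the greedy algorithm, which starting from ∅ repeatedly adds the feasible element with the largest marginal gain, returns a set S with h(S) ≥ (1/(p+1)) · max { h(U) : U ∈ I }. -/
open Finset

/-- Abel-type summation inequality. -/
lemma my_abel (N : ℕ) (a b g : ℕ → ℝ)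
    (hg : ∀ j < N, 0 ≤ g j)
    (hmono : ∀ j k, j ≤ k → k < N → g k ≤ g j)
    (hab : ∀ n ≤ N, ∑ j ∈ range n, a j ≤ ∑ j ∈ range n, b j) :
    ∑ j ∈ range N, a j * g j ≤ ∑ j ∈ range N, b j * g j := by
  induction N generalizing g with
  | zero => simp
  | succ N ih =>
    have key : ∀ c : ℕ → ℝ, ∑ j ∈ range (N+1), c j * g j
        = (∑ j ∈ range N, c j * (g j - g N)) + (∑ j ∈ range (N+1), c j) * g N := by
      intro c
      have h1 : ∑ j ∈ range N, c j * (g j - g N)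
          = ∑ j ∈ range N, c j * g j - (∑ j ∈ range N, c j) * g N := by
        rw [Finset.sum_mul, ← Finset.sum_sub_distrib]
        exact Finset.sum_congr rfl fun j _ => by ring
      rw [h1, Finset.sum_range_succ, Finset.sum_range_succ (f := c)]
      ring
    rw [key a, key b]
    have h1 : ∑ j ∈ range N, a j * (g j - g N) ≤ ∑ j ∈ range N, b j * (g j - g N) := by
      apply ih
      · intro j hj
        have := hmono j N (Nat.le_of_lt hj) (Nat.lt_succ_self N)
        linarith
      · intro j k hjk hk
        have := hmono j k hjk (Nat.lt_succ_of_lt hk)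
        linarith [hmono j k hjk (Nat.lt_succ_of_lt hk)]
      · intro n hn
        exact hab n (Nat.le_succ_of_le hn)
    have h2 : (∑ j ∈ range (N+1), a j) * g N ≤ (∑ j ∈ range (N+1), b j) * g N :=
      mul_le_mul_of_nonneg_right (hab (N+1) le_rfl) (hg N (Nat.lt_succ_self N))
    linarith

/-- Submodular sum bound: adding a disjoint set costs at most the sum of individual marginals. -/
lemma my_submod_sum {ι : Type*} [DecidableEq ι] (h : Finset ι → ℝ)
    (h_sub : ∀ A B : Finset ι, A ⊆ B → ∀ e ∉ B,
      h (insert e A) - h A ≥ h (insert e B) - h B)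
    (S : Finset ι) :
    ∀ X : Finset ι, Disjoint X S →
      h (S ∪ X) - h S ≤ ∑ e ∈ X, (h (insert e S) - h S) := by
  intro X
  induction X using Finset.induction_on with
  | empty => simp
  | @insert a X ha ih =>
    intro hdisj
    have hdX : Disjoint X S := (Finset.disjoint_insert_left.mp hdisj).2
    have haS : a ∉ S := (Finset.disjoint_insert_left.mp hdisj).1
    have haSX : a ∉ S ∪ X := by simp [haS, ha]
    have h1 : h (insert a (S ∪ X)) - h (S ∪ X) ≤ h (insert a S) - h S :=
      h_sub S (S ∪ X) Finset.subset_union_left a haSX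
    have h2 : S ∪ insert a X = insert a (S ∪ X) := by
      ext x; simp [or_comm, or_left_comm]
    rw [h2, Finset.sum_insert ha]
    have := ih hdX
    linarith


/-- Fisher–Nemhauser–Wolsey: the greedy algorithm applied to a
normalized monotone submodular function over the intersection of `p` matroids
returns a set whose value is at least `1/(p+1)` of the optimum, stated as
`h U ≤ (p+1) * h (s T)` for every feasible `U`. -/
theorem greedy_p_matroid_guarantee {ι : Type*} [Fintype ι] [DecidableEq ι]
    (h : Finset ι → ℝ)
    (h_nonneg : ∀ S, 0 ≤ h S)
    (h_norm : h ∅ = 0)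
    (h_mono : ∀ A B : Finset ι, A ⊆ B → h A ≤ h B)
    (h_sub : ∀ A B : Finset ι, A ⊆ B → ∀ e ∉ B,
      h (insert e A) - h A ≥ h (insert e B) - h B)
    {p : ℕ} (I : Fin p → Finset ι → Prop)
    (hI_empty : ∀ i, I i ∅)
    (hI_down : ∀ i, ∀ A B : Finset ι, I i A → B ⊆ A → I i B)
    (hI_exch : ∀ i, ∀ A B : Finset ι, I i A → I i B → B.card < A.card →
      ∃ e ∈ A, e ∉ B ∧ I i (insert e B))
    (F : Finset ι → Prop) (hF : ∀ S, F S ↔ ∀ i, I i S)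
    -- the greedy trajectory `s 0 = ∅, …, s T`
    (T : ℕ) (s : ℕ → Finset ι)
    (hs0 : s 0 = ∅)
    (hstep : ∀ j < T, ∃ e ∉ s j, s (j + 1) = insert e (s j) ∧ F (s (j + 1)) ∧
      ∀ e' ∉ s j, F (insert e' (s j)) → h (insert e' (s j)) ≤ h (s (j + 1)))
    (hstop : ∀ e ∉ s T, F (insert e (s T)) → h (insert e (s T)) - h (s T) ≤ 0) :
    ∀ U : Finset ι, F U → h U ≤ (p + 1 : ℝ) * h (s T) := by
  classical
  intro U hU
  -- basic facts about the greedy trajectory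
  have hsub_step : ∀ j < T, s j ⊆ s (j + 1) := by
    intro j hj
    obtain ⟨e, he, heq, -⟩ := hstep j hj
    rw [heq]; exact Finset.subset_insert _ _
  have hchain : ∀ j k, j ≤ k → k ≤ T → s j ⊆ s k := by
    intro j k hjk hkT
    induction k with
    | zero => rw [Nat.le_zero.mp hjk]
    | succ k ih =>
      rcases Nat.eq_or_lt_of_le hjk with rfl | hlt
      · exact subset_rfl
      · exact (ih (Nat.lt_succ_iff.mp hlt) (by omega)).trans (hsub_step k (by omega))
  have hFdown : ∀ A B : Finset ι, F A → B ⊆ A → F B := by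
    intro A B hA hBA
    rw [hF] at hA ⊢
    exact fun i => hI_down i A B (hA i) hBA
  have hF_s : ∀ n ≤ T, F (s n) := by
    intro n hn
    cases n with
    | zero => rw [hs0, hF]; exact hI_empty
    | succ m => obtain ⟨e, -, -, hFm, -⟩ := hstep m (by omega); exact hFm
  have hcard : ∀ n ≤ T, (s n).card = n := by
    intro n hn
    induction n with
    | zero => rw [hs0]; simp
    | succ m ih =>
      obtain ⟨e, he, heq, -⟩ := hstep m (by omega)
      rw [heq, Finset.card_insert_of_notMem he, ih (by omega)]
  -- bound on blocked sets
  have hDcard : ∀ n ≤ T, (U.filter fun e => ¬ F (insert e (s n))).card ≤ p * n := by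
    intro n hn
    have per : ∀ i : Fin p, (U.filter fun e => ¬ I i (insert e (s n))).card ≤ n := by
      intro i
      by_contra hc
      push_neg at hc
      have hDind : I i (U.filter fun e => ¬ I i (insert e (s n))) :=
        hI_down i U _ ((hF U).mp hU i) (Finset.filter_subset _ _)
      have hsind : I i (s n) := (hF _).mp (hF_s n hn) i
      obtain ⟨e, heD, -, hIe⟩ := hI_exch i _ (s n) hDind hsind (by rw [hcard n hn]; omega)
      exact (Finset.mem_filter.mp heD).2 hIe
    have hsubU : (U.filter fun e => ¬ F (insert e (s n)))
        ⊆ Finset.univ.biUnion (fun i : Fin p => U.filter fun e => ¬ I i (insert e (s n))) := by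
      intro e he
      rw [Finset.mem_filter] at he
      rw [hF] at he
      push_neg at he
      obtain ⟨i, hi⟩ := he.2
      exact Finset.mem_biUnion.mpr ⟨i, Finset.mem_univ i, Finset.mem_filter.mpr ⟨he.1, hi⟩⟩
    calc (U.filter fun e => ¬ F (insert e (s n))).card
        ≤ (Finset.univ.biUnion (fun i : Fin p => U.filter fun e => ¬ I i (insert e (s n)))).card :=
          Finset.card_le_card hsubU
      _ ≤ ∑ i : Fin p, (U.filter fun e => ¬ I i (insert e (s n))).card :=
          Finset.card_biUnion_le
      _ ≤ ∑ _i : Fin p, n := Finset.sum_le_sum fun i _ => per i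
      _ = p * n := by simp [mul_comm]
  -- the blocking time
  set S := s T with hSdef
  set B := (U \ S).filter (fun e => ¬ F (insert e S)) with hBdef
  have hBsub : B ⊆ U \ S := Finset.filter_subset _ _
  set t : ι → ℕ := fun e =>
    if hb : ∃ n, ¬ F (insert e (s n)) then Nat.find hb else 0 with htdef
  have hFe : ∀ e ∈ U, F {e} := by
    intro e he
    exact hFdown U {e} hU (Finset.singleton_subset_iff.mpr he)
  have ht_spec : ∀ e ∈ B, ¬ F (insert e (s (t e))) := by
    intro e he
    have hb : ∃ n, ¬ F (insert e (s n)) := ⟨T, (Finset.mem_filter.mp he).2⟩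
    simp only [htdef, dif_pos hb]
    exact Nat.find_spec hb
  have ht_le : ∀ e ∈ B, t e ≤ T := by
    intro e he
    have hb : ∃ n, ¬ F (insert e (s n)) := ⟨T, (Finset.mem_filter.mp he).2⟩
    simp only [htdef, dif_pos hb]
    exact Nat.find_le (Finset.mem_filter.mp he).2
  have ht_pos : ∀ e ∈ B, 1 ≤ t e := by
    intro e he
    have hb : ∃ n, ¬ F (insert e (s n)) := ⟨T, (Finset.mem_filter.mp he).2⟩
    have heU : e ∈ U := (Finset.mem_sdiff.mp (hBsub he)).1
    simp only [htdef, dif_pos hb]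
    rcases Nat.eq_zero_or_pos (Nat.find hb) with h0 | h1
    · exfalso
      have := Nat.find_spec hb
      rw [h0, hs0] at this
      exact this (by simpa using hFe e heU)
    · exact h1
  have ht_min : ∀ e ∈ B, F (insert e (s (t e - 1))) := by
    intro e he
    have hb : ∃ n, ¬ F (insert e (s n)) := ⟨T, (Finset.mem_filter.mp he).2⟩
    have h1 : 1 ≤ t e := ht_pos e he
    have : ¬ ¬ F (insert e (s (t e - 1))) := by
      have hlt : t e - 1 < t e := by omega
      simp only [htdef, dif_pos hb] at hlt ⊢
      exact Nat.find_min hb hlt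
    exact not_not.mp this
  -- marginal gains along the trajectory
  set g : ℕ → ℝ := fun j => h (s (j + 1)) - h (s j) with hgdef
  have hg_nonneg : ∀ j < T, 0 ≤ g j := by
    intro j hj
    have := h_mono (s j) (s (j + 1)) (hsub_step j hj)
    simp only [hgdef]; linarith
  have hg_step : ∀ j, j + 1 < T → g (j + 1) ≤ g j := by
    intro j hj
    obtain ⟨e, he, heq, hFnew, -⟩ := hstep (j + 1) hj
    obtain ⟨e0, he0, heq0, hF0, hmax0⟩ := hstep j (by omega)
    have hejs : e ∉ s j := fun hm => he (hsub_step j (by omega) hm)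
    have hFe : F (insert e (s j)) := by
      apply hFdown (s (j + 1 + 1)) _ hFnew
      rw [heq]
      exact Finset.insert_subset_insert e (hsub_step j (by omega))
    have h1 : h (insert e (s (j + 1))) - h (s (j + 1)) ≤ h (insert e (s j)) - h (s j) :=
      h_sub (s j) (s (j + 1)) (hsub_step j (by omega)) e he
    have h2 : h (insert e (s j)) ≤ h (s (j + 1)) := hmax0 e hejs hFe
    simp only [hgdef]
    rw [heq]
    linarith
  have hg_anti : ∀ j k, j ≤ k → k < T → g k ≤ g j := by
    intro j k hjk hkT
    induction k with
    | zero => rw [Nat.le_zero.mp hjk]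
    | succ k ih =>
      rcases Nat.eq_or_lt_of_le hjk with rfl | hlt
      · exact le_rfl
      · exact (hg_step k hkT).trans (ih (Nat.lt_succ_iff.mp hlt) (by omega))
  -- per-element marginal bound for blocked elements
  have hmarg : ∀ e ∈ B, h (insert e S) - h S ≤ g (t e - 1) := by
    intro e he
    have h1 : 1 ≤ t e := ht_pos e he
    have hle : t e ≤ T := ht_le e he
    have hjT : t e - 1 < T := by omega
    have heS : e ∉ S := (Finset.mem_sdiff.mp (hBsub he)).2
    have hstep1 : h (insert e S) - h S ≤ h (insert e (s (t e - 1))) - h (s (t e - 1)) :=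
      h_sub (s (t e - 1)) S (hchain (t e - 1) T (by omega) le_rfl) e heS
    obtain ⟨e0, he0, heq0, hF0, hmax0⟩ := hstep (t e - 1) hjT
    have hej : e ∉ s (t e - 1) := fun hm => heS (hchain (t e - 1) T (by omega) le_rfl hm)
    have h2 : h (insert e (s (t e - 1))) ≤ h (s (t e - 1 + 1)) := hmax0 e hej (ht_min e he)
    have h3 : g (t e - 1) = h (s (t e - 1 + 1)) - h (s (t e - 1)) := rfl
    linarith
  -- counting: partial sums of fiber cardinalities
  set c : ℕ → ℝ := fun j => ((B.filter fun e => t e - 1 = j).card : ℝ) with hcdef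
  have hcount : ∀ n ≤ T, ∑ j ∈ range n, c j ≤ ∑ j ∈ range n, (p : ℝ) := by
    intro n hn
    set B' := B.filter (fun e => t e ≤ n) with hB'def
    have hmaps : ∀ e ∈ B', t e - 1 ∈ range n := by
      intro e he
      rw [hB'def, Finset.mem_filter] at he
      have := ht_pos e he.1
      rw [Finset.mem_range]; omega
    have hcardeq : B'.card = ∑ j ∈ range n, (B'.filter fun e => t e - 1 = j).card :=
      Finset.card_eq_sum_card_fiberwise hmaps
    have hfib : ∀ j ∈ range n, (B'.filter fun e => t e - 1 = j) = (B.filter fun e => t e - 1 = j) := by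
      intro j hj
      rw [Finset.mem_range] at hj
      rw [hB'def, Finset.filter_filter]
      apply Finset.filter_congr
      intro e he
      have := ht_pos e he
      constructor
      · exact fun hx => hx.2
      · exact fun hx => ⟨by omega, hx⟩
    have hsum : ∑ j ∈ range n, c j = (B'.card : ℝ) := by
      rw [hcardeq]
      push_cast
      exact Finset.sum_congr rfl fun j hj => by rw [hfib j hj]
    have hB'D : B' ⊆ U.filter fun e => ¬ F (insert e (s n)) := by
      intro e he
      rw [hB'def, Finset.mem_filter] at he
      obtain ⟨heB, hten⟩ := he
      have heU : e ∈ U := (Finset.mem_sdiff.mp (hBsub heB)).1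
      refine Finset.mem_filter.mpr ⟨heU, fun hFn => ?_⟩
      exact ht_spec e heB (hFdown _ _ hFn
        (Finset.insert_subset_insert e (hchain (t e) n hten hn)))
    have hcard' : (B'.card : ℝ) ≤ (p : ℝ) * n := by
      have := (Finset.card_le_card hB'D).trans (hDcard n hn)
      exact_mod_cast this
    rw [hsum, Finset.sum_const, Finset.card_range, nsmul_eq_mul]
    linarith [hcard']
  -- sum over blocked elements, fiberwise
  have hfiber : ∑ e ∈ B, g (t e - 1) = ∑ j ∈ range T, c j * g j := by
    have hmaps : ∀ e ∈ B, t e - 1 ∈ range T := by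
      intro e he
      have := ht_pos e he
      have := ht_le e he
      rw [Finset.mem_range]; omega
    rw [← Finset.sum_fiberwise_of_maps_to hmaps (fun e => g (t e - 1))]
    refine Finset.sum_congr rfl fun j _ => ?_
    have heq : ∑ e ∈ B.filter (fun e => t e - 1 = j), g (t e - 1)
        = ∑ _e ∈ B.filter (fun e => t e - 1 = j), g j :=
      Finset.sum_congr rfl (fun e he => by rw [(Finset.mem_filter.mp he).2])
    rw [hcdef, heq, Finset.sum_const, nsmul_eq_mul]
  -- Abel
  have habel : ∑ j ∈ range T, c j * g j ≤ ∑ j ∈ range T, (p : ℝ) * g j :=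
    my_abel T c (fun _ => (p : ℝ)) g hg_nonneg hg_anti hcount
  -- telescoping
  have htel : ∑ j ∈ range T, g j = h S := by
    simp only [hgdef]
    rw [Finset.sum_range_sub (f := fun j => h (s j)), hs0, h_norm, sub_zero]
  have hptel : ∑ j ∈ range T, (p : ℝ) * g j = (p : ℝ) * h S := by
    rw [← Finset.mul_sum, htel]
  -- main chain
  have hUSU : U ⊆ S ∪ (U \ S) := by
    intro e he
    by_cases hS : e ∈ S
    · exact Finset.mem_union_left _ hS
    · exact Finset.mem_union_right _ (Finset.mem_sdiff.mpr ⟨he, hS⟩)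
  have h1 : h U ≤ h (S ∪ (U \ S)) := h_mono _ _ hUSU
  have h2 : h (S ∪ (U \ S)) - h S ≤ ∑ e ∈ U \ S, (h (insert e S) - h S) :=
    my_submod_sum h h_sub S (U \ S) Finset.sdiff_disjoint
  have h3 : ∑ e ∈ U \ S, (h (insert e S) - h S) ≤ ∑ e ∈ B, (h (insert e S) - h S) := by
    rw [← Finset.sum_filter_add_sum_filter_not (U \ S) (fun e => ¬ F (insert e S))
      (fun e => h (insert e S) - h S)]
    have hrest : ∑ e ∈ (U \ S).filter (fun e => ¬ ¬ F (insert e S)),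
        (h (insert e S) - h S) ≤ 0 := by
      apply Finset.sum_nonpos
      intro e he
      rw [Finset.mem_filter, not_not] at he
      obtain ⟨heUS, hFe⟩ := he
      exact hstop e (Finset.mem_sdiff.mp heUS).2 hFe
    rw [hBdef]
    linarith
  have h4 : ∑ e ∈ B, (h (insert e S) - h S) ≤ ∑ e ∈ B, g (t e - 1) :=
    Finset.sum_le_sum hmarg
  have hfinal : ∑ e ∈ B, g (t e - 1) ≤ (p : ℝ) * h S := by
    rw [hfiber]; linarith [habel, hptel.le]
  have : h U ≤ h S + (p : ℝ) * h S := by linarith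
  linarith
end

section
/- Approximate greedy guarantee: Let h : 2^E → ℝ≥0 be a normalized monotone submodular function and I the intersection of p matroids on finite E. If a greedy algorithm at each step selects a feasible element whose marginal gain is at least a factor β ∈ (0,1] of the best feasible marginal gain, then the output S satisfies h(S) ≥ (β/(β+p)) · max{ h(U) : U ∈ I }. -/
/-!
Fisher–Nemhauser–Wolsey charging argument. Let `s₀ ⊆ ⋯ ⊆ s_T` be the greedy sets and `b t` the best
feasible marginal gain at `s t` among the elements of `U \ s T`. Greedy gains `β * b t` telescope to
at most `h (s T)`. On the other side, by submodularity `h U ≤ h (s T) + ∑ u ∈ U \ s T, ρ u`,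
where `ρ u` is the gain of `u` at `s T`. An element that can still be added at the end contributes
`ρ u ≤ 0`; every other element left the feasible candidates at some step `t`, and then
`ρ u ≤ b t`. Exchange in each of the `p` matroids shows that at most `p * t` elements of `U` are
blocked by `s t`, and since `b` is antitone, summation by parts bounds the sum by `p * ∑ b t`.
-/

open Finset

section

variable {α : Type*} [DecidableEq α]

theorem apply_union_le_add_sum_sub {h : Finset α → ℝ}
    (h_sub : ∀ A B : Finset α, A ⊆ B → ∀ e ∉ B,
      h (insert e A) - h A ≥ h (insert e B) - h B)
    {S C : Finset α} (hSC : Disjoint S C) :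
    h (S ∪ C) ≤ h S + ∑ u ∈ C, (h (insert u S) - h S) := by
  induction C using Finset.induction_on with
  | empty => simp
  | insert a C ha ih =>
    rw [disjoint_insert_right] at hSC
    have hgain := h_sub S (S ∪ C) subset_union_left a (by simp [hSC.1, ha])
    rw [union_insert, sum_insert ha]
    linarith [ih hSC.2]

theorem sum_le_mul_sum_of_card_le_mul {W : ℕ → Finset α} {f : α → ℝ} {b : ℕ → ℝ} {p n : ℕ}
    (hW : ∀ t < n, W t ⊆ W (t + 1)) (hcard : ∀ t ≤ n, #(W t) ≤ p * t)
    (hf : ∀ t < n, ∀ u ∈ W (t + 1) \ W t, f u ≤ b t)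
    (hb : ∀ t < n, b (t + 1) ≤ b t) (hbn : 0 ≤ b n) :
    ∑ u ∈ W n, f u ≤ p * ∑ t ∈ range n, b t := by
  have hslack : ∀ t ≤ n, 0 ≤ (p * t - #(W t) : ℝ) := fun t ht =>
    sub_nonneg.2 (by exact_mod_cast hcard t ht)
  -- summation by parts: the unused budget `p * m - #(W m)` is still worth `b m` per slot
  suffices key : ∀ m ≤ n, ∑ u ∈ W m, f u + (p * m - #(W m)) * b m ≤ p * ∑ t ∈ range m, b t by
    linarith [key n le_rfl, mul_nonneg (hslack n le_rfl) hbn]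
  intro m hm
  induction m with
  | zero => simp [card_eq_zero.1 (Nat.le_zero.1 (hcard 0 hm))]
  | succ m ih =>
    have hsub := hW m hm
    have hnew : ∑ u ∈ W (m + 1) \ W m, f u ≤ (#(W (m + 1)) - #(W m)) * b m := by
      have := sum_le_card_nsmul _ _ _ (hf m hm)
      rwa [nsmul_eq_mul, card_sdiff_of_subset hsub, Nat.cast_sub (card_le_card hsub)] at this
    have hdecay := mul_le_mul_of_nonneg_left (hb m hm) (hslack (m + 1) hm)
    rw [← sum_sdiff hsub, sum_range_succ]
    push_cast at hdecay ⊢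
    linarith [ih (Nat.le_of_succ_le hm)]

theorem card_le_of_forall_not_indep_insert {I : Finset α → Prop}
    (hI_exch : ∀ A B : Finset α, I A → I B → #B < #A →
      ∃ e ∈ A, e ∉ B ∧ I (insert e B))
    {S A : Finset α} (hS : I S) (hA : I A) (hA_not : ∀ u ∈ A, ¬ I (insert u S)) :
    #A ≤ #S := by
  by_contra! hlt
  obtain ⟨e, he, -, hI⟩ := hI_exch A S hA hS hlt
  exact hA_not e he hI

theorem card_le_mul_of_forall_not_indep_insert {p : ℕ} {I : Fin p → Finset α → Prop}
    (hI_down : ∀ i, ∀ A B : Finset α, I i A → B ⊆ A → I i B)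
    (hI_exch : ∀ i, ∀ A B : Finset α, I i A → I i B → #B < #A →
      ∃ e ∈ A, e ∉ B ∧ I i (insert e B))
    {S A U : Finset α} (hS : ∀ i, I i S) (hU : ∀ i, I i U) (hAU : A ⊆ U)
    (hA_not : ∀ u ∈ A, ¬ ∀ i, I i (insert u S)) :
    #A ≤ p * #S := by
  classical
  have hcover : A ⊆ univ.biUnion fun i => {u ∈ A | ¬ I i (insert u S)} := fun u hu => by
    obtain ⟨i, hi⟩ := not_forall.1 (hA_not u hu)
    exact mem_biUnion.2 ⟨i, mem_univ i, mem_filter.2 ⟨hu, hi⟩⟩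
  calc #A ≤ ∑ i, #{u ∈ A | ¬ I i (insert u S)} :=
        (card_le_card hcover).trans card_biUnion_le
    _ ≤ ∑ _i : Fin p, #S := sum_le_sum fun i _ =>
        card_le_of_forall_not_indep_insert (hI_exch i) (hS i)
          (hI_down i U _ (hU i) ((filter_subset _ _).trans hAU))
          fun u hu => (mem_filter.1 hu).2
    _ = p * #S := by simp

open Classical in
noncomputable def maxGain (h : Finset α → ℝ) (F : Finset α → Prop) (C S : Finset α) : ℝ :=
  ((C.filter fun e => F (insert e S)).sup fun e => (h (insert e S) - h S).toNNReal : NNReal)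

section maxGain

variable {h : Finset α → ℝ} {F : Finset α → Prop} {C S : Finset α}

theorem maxGain_nonneg : 0 ≤ maxGain h F C S := NNReal.coe_nonneg _

theorem sub_le_maxGain {e : α} (he : e ∈ C) (hF : F (insert e S)) :
    h (insert e S) - h S ≤ maxGain h F C S := by
  classical
  exact (Real.le_coe_toNNReal _).trans <| NNReal.coe_le_coe.2 <|
    Finset.le_sup (f := fun e => (h (insert e S) - h S).toNNReal) (mem_filter.2 ⟨he, hF⟩)

theorem maxGain_le {c : ℝ} (hc : 0 ≤ c)
    (H : ∀ e ∈ C, F (insert e S) → h (insert e S) - h S ≤ c) : maxGain h F C S ≤ c := by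
  classical
  rw [maxGain, ← Real.coe_toNNReal c hc, NNReal.coe_le_coe]
  exact Finset.sup_le fun e he =>
    Real.toNNReal_le_toNNReal (H e (mem_filter.1 he).1 (mem_filter.1 he).2)

theorem maxGain_anti
    (h_sub : ∀ A B : Finset α, A ⊆ B → ∀ e ∉ B,
      h (insert e A) - h A ≥ h (insert e B) - h B)
    (hF_down : ∀ A B : Finset α, F A → B ⊆ A → F B) {S' : Finset α} (hSS' : S ⊆ S') :
    maxGain h F C S' ≤ maxGain h F C S := by
  refine maxGain_le maxGain_nonneg fun e he hF' => ?_
  by_cases heS' : e ∈ S'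
  · rw [insert_eq_of_mem heS', sub_self]
    exact maxGain_nonneg
  · exact le_trans (h_sub S S' hSS' e heS')
      (sub_le_maxGain he (hF_down _ _ hF' (insert_subset_insert e hSS')))

theorem mul_maxGain_le {β d : ℝ} (hβ : 0 < β) (hd : 0 ≤ d)
    (hbest : ∀ e ∉ S, F (insert e S) → β * (h (insert e S) - h S) ≤ d) :
    β * maxGain h F C S ≤ d := by
  rw [← le_div_iff₀' hβ]
  refine maxGain_le (div_nonneg hd hβ.le) fun e _ hF => ?_
  by_cases heS : e ∈ S
  · rw [insert_eq_of_mem heS, sub_self]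
    exact div_nonneg hd hβ.le
  · rw [le_div_iff₀' hβ]
    exact hbest e heS hF

end maxGain

theorem mul_sum_maxGain_le {h : Finset α → ℝ} {F : Finset α → Prop} {C : Finset α} {β : ℝ}
    (hβ : 0 < β) (h_mono : ∀ A B : Finset α, A ⊆ B → h A ≤ h B)
    {s : ℕ → Finset α} {T : ℕ} (hs : MonotoneOn s (Set.Iic T))
    (hbest : ∀ t < T, ∀ e ∉ s t, F (insert e (s t)) →
      β * (h (insert e (s t)) - h (s t)) ≤ h (s (t + 1)) - h (s t)) :
    β * ∑ t ∈ range T, maxGain h F C (s t) ≤ h (s T) - h (s 0) := by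
  rw [mul_sum]
  refine (sum_le_sum fun t ht => ?_).trans_eq (sum_range_sub (fun t => h (s t)) T)
  have ht : t < T := mem_range.1 ht
  have hsucc : s t ⊆ s (t + 1) := hs (Set.mem_Iic.2 ht.le) (Set.mem_Iic.2 ht) t.le_succ
  exact mul_maxGain_le hβ (sub_nonneg.2 (h_mono _ _ hsucc)) (hbest t ht)

theorem le_add_mul_sum_maxGain {h : Finset α → ℝ} {F : Finset α → Prop} {p T : ℕ}
    {s : ℕ → Finset α} {U : Finset α}
    (h_mono : ∀ A B : Finset α, A ⊆ B → h A ≤ h B)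
    (h_sub : ∀ A B : Finset α, A ⊆ B → ∀ e ∉ B,
      h (insert e A) - h A ≥ h (insert e B) - h B)
    (hF_down : ∀ A B : Finset α, F A → B ⊆ A → F B)
    (hF_card : ∀ S A V : Finset α, F S → F V → A ⊆ V → (∀ u ∈ A, ¬ F (insert u S)) →
      #A ≤ p * #S)
    (hs : MonotoneOn s (Set.Iic T)) (hs_card : ∀ t ≤ T, #(s t) ≤ t)
    (hs_feas : ∀ t ≤ T, F (s t))
    (hstop : ∀ e ∉ s T, F (insert e (s T)) → h (insert e (s T)) - h (s T) ≤ 0) (hU : F U) :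
    h U ≤ h (s T) + p * ∑ t ∈ range T, maxGain h F (U \ s T) (s t) := by
  classical
  have hsT : ∀ t ≤ T, s t ⊆ s T := fun t ht =>
    hs (Set.mem_Iic.2 ht) (Set.mem_Iic.2 le_rfl) ht
  have hsucc : ∀ t < T, s t ⊆ s (t + 1) := fun t ht =>
    hs (Set.mem_Iic.2 ht.le) (Set.mem_Iic.2 ht) t.le_succ
  set K : ℕ → Finset α := fun t => {u ∈ U \ s T | ¬ F (insert u (s t))} with hK
  have hK_sum : ∑ u ∈ K T, (h (insert u (s T)) - h (s T)) ≤
      p * ∑ t ∈ range T, maxGain h F (U \ s T) (s t) := by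
    refine sum_le_mul_sum_of_card_le_mul (fun t ht => ?_) (fun t ht => ?_)
      (fun t ht u hu => ?_) (fun t ht => maxGain_anti h_sub hF_down (hsucc t ht)) maxGain_nonneg
    · intro u hu
      simp only [hK, mem_filter] at hu ⊢
      exact ⟨hu.1, fun hF => hu.2 (hF_down _ _ hF (insert_subset_insert u (hsucc t ht)))⟩
    · calc #(K t) ≤ p * #(s t) := hF_card _ _ _ (hs_feas t ht) hU
            ((filter_subset _ _).trans sdiff_subset) fun u hu => (mem_filter.1 hu).2
        _ ≤ p * t := Nat.mul_le_mul_left p (hs_card t ht)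
    · simp only [hK, mem_sdiff, mem_filter, not_and, not_not] at hu
      obtain ⟨⟨⟨huU, hu_sT⟩, -⟩, hfeas⟩ := hu
      exact le_trans (h_sub _ _ (hsT t ht.le) u hu_sT)
        (sub_le_maxGain (mem_sdiff.2 ⟨huU, hu_sT⟩) (hfeas ⟨huU, hu_sT⟩))
  calc h U ≤ h (s T ∪ U \ s T) := h_mono _ _ le_sup_sdiff
    _ ≤ h (s T) + ∑ u ∈ U \ s T, (h (insert u (s T)) - h (s T)) :=
        apply_union_le_add_sum_sub h_sub disjoint_sdiff
    _ ≤ h (s T) + ∑ u ∈ K T, (h (insert u (s T)) - h (s T)) := by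
        refine (add_le_add_iff_left _).2 ?_
        rw [← sum_filter_add_sum_filter_not (U \ s T) fun u => ¬ F (insert u (s T))]
        refine add_le_of_nonpos_right (sum_nonpos fun u hu => ?_)
        obtain ⟨hu, hF⟩ := mem_filter.1 hu
        exact hstop u (mem_sdiff.1 hu).2 (not_not.1 hF)
    _ ≤ _ := (add_le_add_iff_left _).2 hK_sum

end

theorem approximate_greedy_guarantee_general {ι : Type*} [DecidableEq ι]
    (h : Finset ι → ℝ)
    (h_norm : h ∅ = 0)
    (h_mono : ∀ A B : Finset ι, A ⊆ B → h A ≤ h B)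
    (h_sub : ∀ A B : Finset ι, A ⊆ B → ∀ e ∉ B,
      h (insert e A) - h A ≥ h (insert e B) - h B)
    {p : ℕ} (I : Fin p → Finset ι → Prop)
    (hI_down : ∀ i, ∀ A B : Finset ι, I i A → B ⊆ A → I i B)
    (hI_exch : ∀ i, ∀ A B : Finset ι, I i A → I i B → B.card < A.card →
      ∃ e ∈ A, e ∉ B ∧ I i (insert e B))
    (F : Finset ι → Prop) (hF : ∀ S, F S ↔ ∀ i, I i S)
    (β : ℝ) (hβ : 0 < β)
    -- the β-approximate greedy trajectory `s 0 = ∅, …, s T`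
    (T : ℕ) (s : ℕ → Finset ι)
    (hs0 : s 0 = ∅)
    (hstep : ∀ j < T, ∃ e ∉ s j, s (j + 1) = insert e (s j) ∧ F (s (j + 1)) ∧
      ∀ e' ∉ s j, F (insert e' (s j)) →
        β * (h (insert e' (s j)) - h (s j)) ≤ h (s (j + 1)) - h (s j))
    (hstop : ∀ e ∉ s T, F (insert e (s T)) → h (insert e (s T)) - h (s T) ≤ 0) :
    ∀ U : Finset ι, F U → β * h U ≤ (β + p) * h (s T) := by
  obtain rfl : F = fun S => ∀ i, I i S := funext fun S => propext (hF S)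
  intro U hU
  choose e _ hs_succ hs_feas hbest using hstep
  have hs : MonotoneOn s (Set.Iic T) := monotoneOn_of_le_succ Set.ordConnected_Iic
    fun t _ _ ht => by
      rw [Order.succ_eq_add_one, Set.mem_Iic] at ht
      exact hs_succ t ht ▸ subset_insert _ _
  have hs_card : ∀ t ≤ T, #(s t) ≤ t := by
    intro t ht
    induction t with
    | zero => simp [hs0]
    | succ t ih =>
      rw [hs_succ t ht]
      exact (card_insert_le _ _).trans (Nat.succ_le_succ (ih (Nat.le_of_succ_le ht)))
  have hs_indep : ∀ t ≤ T, ∀ i, I i (s t)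
    | 0, _ => fun i => hI_down i U _ (hU i) (hs0 ▸ empty_subset U)
    | t + 1, ht => hs_feas t ht
  have hgreedy :=
    mul_sum_maxGain_le (F := fun S => ∀ i, I i S) (C := U \ s T) hβ h_mono hs hbest
  have hbound := le_add_mul_sum_maxGain h_mono h_sub
    (fun A B hA hBA i => hI_down i A B (hA i) hBA)
    (fun _ _ _ hS hV hAV hA => card_le_mul_of_forall_not_indep_insert hI_down hI_exch hS hV hAV hA)
    hs hs_card hs_indep hstop hU
  rw [hs0, h_norm, sub_zero] at hgreedy
  nlinarith [mul_le_mul_of_nonneg_left hbound hβ.le,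
    mul_le_mul_of_nonneg_left hgreedy p.cast_nonneg]

/-- a `β`-approximate greedy algorithm for a normalized monotone
submodular function over the intersection of `p` matroids achieves a
`β/(β+p)` approximation: `β * h U ≤ (β + p) * h (s T)` for every feasible `U`. -/
theorem approximate_greedy_guarantee {ι : Type*} [Fintype ι] [DecidableEq ι]
    (h : Finset ι → ℝ)
    (h_nonneg : ∀ S, 0 ≤ h S)
    (h_norm : h ∅ = 0)
    (h_mono : ∀ A B : Finset ι, A ⊆ B → h A ≤ h B)
    (h_sub : ∀ A B : Finset ι, A ⊆ B → ∀ e ∉ B,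
      h (insert e A) - h A ≥ h (insert e B) - h B)
    {p : ℕ} (I : Fin p → Finset ι → Prop)
    (hI_empty : ∀ i, I i ∅)
    (hI_down : ∀ i, ∀ A B : Finset ι, I i A → B ⊆ A → I i B)
    (hI_exch : ∀ i, ∀ A B : Finset ι, I i A → I i B → B.card < A.card →
      ∃ e ∈ A, e ∉ B ∧ I i (insert e B))
    (F : Finset ι → Prop) (hF : ∀ S, F S ↔ ∀ i, I i S)
    (β : ℝ) (hβ : 0 < β) (hβ1 : β ≤ 1)
    -- the β-approximate greedy trajectory `s 0 = ∅, …, s T`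
    (T : ℕ) (s : ℕ → Finset ι)
    (hs0 : s 0 = ∅)
    (hstep : ∀ j < T, ∃ e ∉ s j, s (j + 1) = insert e (s j) ∧ F (s (j + 1)) ∧
      ∀ e' ∉ s j, F (insert e' (s j)) →
        β * (h (insert e' (s j)) - h (s j)) ≤ h (s (j + 1)) - h (s j))
    (hstop : ∀ e ∉ s T, F (insert e (s T)) → h (insert e (s T)) - h (s T) ≤ 0) :
    ∀ U : Finset ι, F U → β * h U ≤ (β + p) * h (s T) :=
  approximate_greedy_guarantee_general h h_norm h_mono h_sub I hI_down hI_exch F hF β hβ T s hs0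
    hstep hstop
end

section
/- Finite-alphabet mutual information bound (determinant form): Let A be a finite set, and for each e ∈ A let M_e be positive semidefinite and N_e ≥ 0 a cap. Define g(A) = min_{R⊆A} ( log det(I + Σ_{e∈A\R} M_e) + Σ_{e∈R} N_e ). Then g is a normalized, monotone, submodular function of A, i.e., a rank function. -/
/-!
Adding a rank-one term `v vᵀ` to a positive definite `Q` multiplies `det Q` by `1 + vᵀ Q⁻¹ v`
(matrix determinant lemma), and `vᵀ Q⁻¹ v` can only decrease when `Q` grows. Writing `B` as a
sum of rank-one terms, this gives `det (P + A + B) det P ≤ det (P + A) det (P + B)`, so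
`S ↦ log det (1 + ∑_{e ∈ S} M e)` is normalized, monotone and submodular.

Capping by a nonnegative modular function keeps these properties: if `S ⊆ X` and `T ⊆ Y` attain
the minima for `X` and `Y`, then `S ∪ T` and `S ∩ T` are admissible for `X ∪ Y` and `X ∩ Y`, and
the modular parts of the four candidates balance exactly.
-/

open Matrix

namespace Matrix

variable {m : Type*} [Fintype m]

@[elab_as_elim]
theorem PosSemidef.induction_vecMulVec {p : Matrix m m ℝ → Prop} (zero : p 0)
    (add : ∀ B v, B.PosSemidef → p B → p (B + vecMulVec v v)) {B : Matrix m m ℝ}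
    (hB : B.PosSemidef) : p B := by
  obtain ⟨k, v, rfl⟩ := posSemidef_iff_eq_sum_vecMulVec.mp hB
  simp only [star_trivial]
  suffices ∀ s : Finset (Fin k), p (∑ i ∈ s, vecMulVec (v i) (v i)) from this _
  intro s
  induction s using Finset.induction_on with
  | empty => simpa using zero
  | insert a s ha ih =>
    rw [Finset.sum_insert ha, add_comm]
    exact add _ _ (posSemidef_sum s fun i _ => posSemidef_vecMulVec_self_star (v i)) ih

variable [DecidableEq m]

theorem det_add_vecMulVec {R : Type*} [CommRing R] {Q : Matrix m m R} (hQ : IsUnit Q.det)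
    (u v : m → R) : (Q + vecMulVec u v).det = Q.det * (1 + v ⬝ᵥ (Q⁻¹ *ᵥ u)) := by
  rw [vecMulVec_eq Unit, det_add_replicateCol_mul_replicateRow hQ, Matrix.mul_assoc,
    ← replicateCol_mulVec, det_unique (1 + _ : Matrix Unit Unit R), add_apply, one_apply_eq,
    replicateRow_mul_replicateCol_apply]

theorem PosDef.dotProduct_inv_add_mulVec_le {Q A : Matrix m m ℝ} (hQ : Q.PosDef)
    (hA : A.PosSemidef) (v : m → ℝ) : v ⬝ᵥ ((Q + A)⁻¹ *ᵥ v) ≤ v ⬝ᵥ (Q⁻¹ *ᵥ v) := by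
  -- Expand `0 ≤ (x - w)ᵀ Q (x - w)` and use `Q x = v = (Q + A) w`.
  set w := (Q + A)⁻¹ *ᵥ v
  set x := Q⁻¹ *ᵥ v
  have hw : (Q + A) *ᵥ w = v := by
    rw [mulVec_mulVec, mul_nonsing_inv _ (hQ.add_posSemidef hA).det_pos.ne'.isUnit, one_mulVec]
  have hx : Q *ᵥ x = v := by
    rw [mulVec_mulVec, mul_nonsing_inv _ hQ.det_pos.ne'.isUnit, one_mulVec]
  have hsymm : x ⬝ᵥ (Q *ᵥ w) = w ⬝ᵥ (Q *ᵥ x) := by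
    rw [dotProduct_mulVec, ← mulVec_transpose, (isHermitian_iff_isSymm.mp hQ.isHermitian).eq,
      dotProduct_comm]
  have hwQw : w ⬝ᵥ (Q *ᵥ w) = w ⬝ᵥ v - w ⬝ᵥ (A *ᵥ w) := by
    rw [← hw, add_mulVec, dotProduct_add, add_sub_cancel_right]
  have hQ_xw := hQ.posSemidef.dotProduct_mulVec_nonneg (x - w)
  have hA_w := hA.dotProduct_mulVec_nonneg w
  simp only [star_trivial, sub_dotProduct, dotProduct_sub, mulVec_sub, hsymm, hx, hwQw]
    at hQ_xw hA_w
  rw [dotProduct_comm v w, dotProduct_comm v x]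
  linarith

theorem PosDef.dotProduct_inv_mulVec_nonneg {Q : Matrix m m ℝ} (hQ : Q.PosDef) (v : m → ℝ) :
    0 ≤ v ⬝ᵥ (Q⁻¹ *ᵥ v) := by
  simpa using hQ.inv.posSemidef.dotProduct_mulVec_nonneg v

theorem PosDef.det_le_det_add_s18 {P B : Matrix m m ℝ} (hP : P.PosDef) (hB : B.PosSemidef) :
    P.det ≤ (P + B).det := by
  refine PosSemidef.induction_vecMulVec (by simp) (fun B v hB ih => ?_) hB
  have hPB := hP.add_posSemidef hB
  rw [← add_assoc, det_add_vecMulVec hPB.det_pos.ne'.isUnit]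
  nlinarith [hPB.dotProduct_inv_mulVec_nonneg v, hPB.det_pos]

theorem PosDef.det_add_add_mul_det_le_s18 {P A B : Matrix m m ℝ} (hP : P.PosDef) (hA : A.PosSemidef)
    (hB : B.PosSemidef) : (P + A + B).det * P.det ≤ (P + A).det * (P + B).det := by
  refine PosSemidef.induction_vecMulVec (by simp) (fun B v hB ih => ?_) hB
  have hPB := hP.add_posSemidef hB
  have hPAB : (P + B + A).PosDef := hPB.add_posSemidef hA
  have hq := hPB.dotProduct_inv_add_mulVec_le hA v
  rw [add_right_comm] at hPAB hq
  simp only [← add_assoc]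
  rw [det_add_vecMulVec hPAB.det_pos.ne'.isUnit, det_add_vecMulVec hPB.det_pos.ne'.isUnit]
  calc (P + A + B).det * (1 + v ⬝ᵥ ((P + A + B)⁻¹ *ᵥ v)) * P.det
      = (P + A + B).det * P.det * (1 + v ⬝ᵥ ((P + A + B)⁻¹ *ᵥ v)) := by ring
    _ ≤ (P + A).det * (P + B).det * (1 + v ⬝ᵥ ((P + B)⁻¹ *ᵥ v)) :=
      mul_le_mul ih (by linarith) (by linarith [hPAB.dotProduct_inv_mulVec_nonneg v])
        (mul_pos (hP.add_posSemidef hA).det_pos hPB.det_pos).le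
    _ = _ := by ring

end Matrix

open Finset

section LogDet

variable {m ι : Type*} [DecidableEq m] {M : ι → Matrix m m ℝ}

theorem posDef_one_add_sum (hM : ∀ e, (M e).PosSemidef) (S : Finset ι) :
    (1 + ∑ e ∈ S, M e).PosDef :=
  PosDef.one.add_posSemidef (posSemidef_sum S fun e _ => hM e)

variable [Fintype m]

variable (M) in
noncomputable def logDetOneAddSum (S : Finset ι) : ℝ := Real.log (1 + ∑ e ∈ S, M e).det

@[simp]
theorem logDetOneAddSum_empty : logDetOneAddSum M ∅ = 0 := by simp [logDetOneAddSum]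

variable [DecidableEq ι]

theorem logDetOneAddSum_mono (hM : ∀ e, (M e).PosSemidef) : Monotone (logDetOneAddSum M) := by
  intro S T hST
  have hT : 1 + ∑ e ∈ T, M e = 1 + ∑ e ∈ S, M e + ∑ e ∈ T \ S, M e := by
    rw [add_assoc, add_comm (∑ e ∈ S, M e), sum_sdiff hST]
  have hS := posDef_one_add_sum hM S
  unfold logDetOneAddSum
  rw [hT]
  exact Real.log_le_log hS.det_pos (hS.det_le_det_add_s18 (posSemidef_sum _ fun e _ => hM e))

theorem logDetOneAddSum_union_add_inter_le (hM : ∀ e, (M e).PosSemidef) (S T : Finset ι) :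
    logDetOneAddSum M (S ∪ T) + logDetOneAddSum M (S ∩ T) ≤
      logDetOneAddSum M S + logDetOneAddSum M T := by
  set P := 1 + ∑ e ∈ S ∩ T, M e
  have hS : 1 + ∑ e ∈ S, M e = P + ∑ e ∈ S \ T, M e := by
    rw [add_assoc, sum_inter_add_sum_sdiff]
  have hT : 1 + ∑ e ∈ T, M e = P + ∑ e ∈ T \ S, M e := by
    rw [add_assoc, inter_comm, sum_inter_add_sum_sdiff]
  have hST : 1 + ∑ e ∈ S ∪ T, M e = P + ∑ e ∈ S \ T, M e + ∑ e ∈ T \ S, M e := by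
    rw [← union_sdiff_self_eq_union, sum_union disjoint_sdiff, ← add_assoc,
      hS]
  have hP : P.PosDef := posDef_one_add_sum hM _
  have hA : (∑ e ∈ S \ T, M e).PosSemidef := posSemidef_sum _ fun e _ => hM e
  have hB : (∑ e ∈ T \ S, M e).PosSemidef := posSemidef_sum _ fun e _ => hM e
  have hPA := hP.add_posSemidef hA
  unfold logDetOneAddSum
  rw [hS, hT, hST, ← Real.log_mul (hPA.add_posSemidef hB).det_pos.ne' hP.det_pos.ne',
    ← Real.log_mul hPA.det_pos.ne' (hP.add_posSemidef hB).det_pos.ne']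
  exact Real.log_le_log (mul_pos (hPA.add_posSemidef hB).det_pos hP.det_pos)
    (hP.det_add_add_mul_det_le_s18 hA hB)

end LogDet

theorem Finset.sum_union_sdiff_add_sum_inter_sdiff {ι β : Type*} [DecidableEq ι] [AddCommGroup β]
    (N : ι → β) {S T X Y : Finset ι} (hS : S ⊆ X) (hT : T ⊆ Y) :
    ∑ e ∈ (X ∪ Y) \ (S ∪ T), N e + ∑ e ∈ (X ∩ Y) \ (S ∩ T), N e =
      ∑ e ∈ X \ S, N e + ∑ e ∈ Y \ T, N e := by
  rw [sum_sdiff_eq_sub (union_subset_union hS hT),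
    sum_sdiff_eq_sub (inter_subset_inter hS hT), sum_sdiff_eq_sub hS,
    sum_sdiff_eq_sub hT, sub_add_sub_comm, sub_add_sub_comm, sum_union_inter,
    sum_union_inter]

section CappedMin

variable {ι : Type*} [DecidableEq ι] {f : Finset ι → ℝ} {N : ι → ℝ}

variable (f N) in
def cappedMin (A : Finset ι) : ℝ :=
  A.powerset.inf' A.powerset_nonempty fun R => f (A \ R) + ∑ e ∈ R, N e

theorem cappedMin_le {S A : Finset ι} (hS : S ⊆ A) :
    cappedMin f N A ≤ f S + ∑ e ∈ A \ S, N e := by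
  simpa only [cappedMin, Finset.sdiff_sdiff_eq_self hS] using inf'_le
    (fun R => f (A \ R) + ∑ e ∈ R, N e) (mem_powerset.mpr (sdiff_subset : A \ S ⊆ A))

theorem exists_cappedMin_eq (A : Finset ι) :
    ∃ S ⊆ A, cappedMin f N A = f S + ∑ e ∈ A \ S, N e := by
  obtain ⟨R, hR, h⟩ := exists_mem_eq_inf' A.powerset_nonempty
    fun R => f (A \ R) + ∑ e ∈ R, N e
  refine ⟨A \ R, sdiff_subset, ?_⟩
  rwa [Finset.sdiff_sdiff_eq_self (mem_powerset.mp hR)]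

@[simp]
theorem cappedMin_empty : cappedMin f N ∅ = f ∅ := by simp [cappedMin]

theorem cappedMin_mono (hf : Monotone f) (hN : ∀ e, 0 ≤ N e) : Monotone (cappedMin f N) := by
  intro A B hAB
  obtain ⟨S, -, hB⟩ := exists_cappedMin_eq (f := f) (N := N) B
  calc cappedMin f N A ≤ f (A ∩ S) + ∑ e ∈ A \ (A ∩ S), N e := cappedMin_le inter_subset_left
    _ ≤ f S + ∑ e ∈ B \ S, N e := by
      rw [sdiff_inter_self_left]
      exact add_le_add (hf inter_subset_right) (sum_le_sum_of_subset_of_nonneg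
        (sdiff_subset_sdiff hAB le_rfl) fun e _ _ => hN e)
    _ = cappedMin f N B := hB.symm

theorem cappedMin_union_add_inter_le (hf : ∀ S T, f (S ∪ T) + f (S ∩ T) ≤ f S + f T)
    (X Y : Finset ι) :
    cappedMin f N (X ∪ Y) + cappedMin f N (X ∩ Y) ≤ cappedMin f N X + cappedMin f N Y := by
  obtain ⟨S, hSX, hX⟩ := exists_cappedMin_eq (f := f) (N := N) X
  obtain ⟨T, hTY, hY⟩ := exists_cappedMin_eq (f := f) (N := N) Y
  calc cappedMin f N (X ∪ Y) + cappedMin f N (X ∩ Y)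
      ≤ (f (S ∪ T) + ∑ e ∈ (X ∪ Y) \ (S ∪ T), N e) + (f (S ∩ T) + ∑ e ∈ (X ∩ Y) \ (S ∩ T), N e) :=
        add_le_add (cappedMin_le (union_subset_union hSX hTY))
          (cappedMin_le (inter_subset_inter hSX hTY))
    _ = (f (S ∪ T) + f (S ∩ T)) + (∑ e ∈ X \ S, N e + ∑ e ∈ Y \ T, N e) := by
      rw [add_add_add_comm, sum_union_sdiff_add_sum_inter_sdiff N hSX hTY]
    _ ≤ (f S + f T) + (∑ e ∈ X \ S, N e + ∑ e ∈ Y \ T, N e) := add_le_add_left (hf S T) _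
    _ = cappedMin f N X + cappedMin f N Y := by rw [hX, hY, add_add_add_comm]

end CappedMin

theorem capped_logdet_rank_function_general {ι : Type*} [DecidableEq ι]
    {n : ℕ} (M : ι → Matrix (Fin n) (Fin n) ℝ) (hM : ∀ e, (M e).PosSemidef)
    (N : ι → ℝ) (hN : ∀ e, 0 ≤ N e)
    (g : Finset ι → ℝ)
    (hg : ∀ A : Finset ι,
      g A = A.powerset.inf' (Finset.powerset_nonempty A)
        (fun R => Real.log (Matrix.det (1 + ∑ e ∈ A \ R, M e)) + ∑ e ∈ R, N e)) :
    g ∅ = 0 ∧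
    (∀ A, 0 ≤ g A) ∧
    (∀ A B : Finset ι, A ⊆ B → g A ≤ g B) ∧
    (∀ A B : Finset ι, A ⊆ B → ∀ e ∉ B,
      g (insert e A) - g A ≥ g (insert e B) - g B) := by
  obtain rfl : g = cappedMin (logDetOneAddSum M) N := funext hg
  have hempty : cappedMin (logDetOneAddSum M) N ∅ = 0 := by simp
  have hmono := cappedMin_mono (logDetOneAddSum_mono hM) hN
  refine ⟨hempty, fun A => hempty.symm.le.trans (hmono (Finset.empty_subset A)), hmono, ?_⟩
  intro A B hAB e he
  have hsub := cappedMin_union_add_inter_le (N := N) (logDetOneAddSum_union_add_inter_le hM)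
    (insert e A) B
  rw [Finset.insert_union, Finset.union_eq_right.mpr hAB, Finset.insert_inter_of_notMem he,
    Finset.inter_eq_left.mpr hAB] at hsub
  linarith

/-- the capped log-det function
`g(A) = min_{R⊆A} ( log det(I + Σ_{e∈A\R} M_e) + Σ_{e∈R} N_e )`, with each
`M_e` positive semidefinite and caps `N_e ≥ 0`, is a rank function:
normalized, monotone and submodular. -/
theorem capped_logdet_rank_function {ι : Type*} [Fintype ι] [DecidableEq ι]
    {n : ℕ} (M : ι → Matrix (Fin n) (Fin n) ℝ) (hM : ∀ e, (M e).PosSemidef)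
    (N : ι → ℝ) (hN : ∀ e, 0 ≤ N e)
    (g : Finset ι → ℝ)
    (hg : ∀ A : Finset ι,
      g A = A.powerset.inf' (Finset.powerset_nonempty A)
        (fun R => Real.log (Matrix.det (1 + ∑ e ∈ A \ R, M e)) + ∑ e ∈ R, N e)) :
    g ∅ = 0 ∧
    (∀ A, 0 ≤ g A) ∧
    (∀ A B : Finset ι, A ⊆ B → g A ≤ g B) ∧
    (∀ A B : Finset ι, A ⊆ B → ∀ e ∉ B,
      g (insert e A) - g A ≥ g (insert e B) - g B) :=
  capped_logdet_rank_function_general M hM N hN g hg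
end
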